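/- arXiv:2512.13952 — 2 statements merged into one kernel-verified Lean document; each statement's English description precedes it below -/
import Mathlib

section
/- Surjectivity of the Laplacian on homogeneous polynomials (Lemma 3.7, from Colding–Minicozzi): For every integer n ≥ 1 and every integer d ≥ 0, the linear map Δ : A_{d+2}^n → A_d^n given by the polynomial Laplacian is surjective; that is, for every homogeneous polynomial p of degree d in n variables there is a homogeneous polynomial q of degree d+2 with Δq = p. -/
/-!
Δ(x^(α + 2e₀)) = (α₀ + 2)(α₀ + 1) x^α + ∑_{i ≠ 0} αᵢ(αᵢ - 1) x^(α + 2e₀ - 2eᵢ), and every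
monomial in the sum has a larger exponent of x₀ than x^α. So by descending induction on that
exponent each monomial of degree d, hence all of A_d, lies in Δ(A_{d+2}).
-/

noncomputable section

open MvPolynomial

/-- The polynomial Laplacian `Δp = ∑ i, ∂²p/∂x_i²` on `MvPolynomial (Fin n) ℝ`. -/
def polyLap (n : ℕ) : MvPolynomial (Fin n) ℝ →ₗ[ℝ] MvPolynomial (Fin n) ℝ :=
  ∑ i : Fin n, ((pderiv i).toLinearMap ∘ₗ (pderiv i).toLinearMap)

lemma Finsupp.degree_tsub_single {σ : Type*} (f : σ →₀ ℕ) {i : σ} {k : ℕ} (h : k ≤ f i) :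
    (f - single i k).degree = f.degree - k := by
  have := map_add degree (f - single i k) (single i k)
  rw [tsub_add_cancel_of_le (single_le_iff.2 h), degree_single] at this
  omega

lemma polyLap_apply (n : ℕ) (p : MvPolynomial (Fin n) ℝ) :
    polyLap n p = ∑ i, pderiv i (pderiv i p) := by
  simp [polyLap]

lemma polyLap_monomial (n : ℕ) (β : Fin n →₀ ℕ) (c : ℝ) :
    polyLap n (monomial β c) =
      ∑ i, monomial (β - Finsupp.single i 2) (c * ((β i * (β i - 1) : ℕ) : ℝ)) := by
  rw [polyLap_apply]
  refine Finset.sum_congr rfl fun i _ => ?_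
  rw [pderiv_monomial, pderiv_monomial, tsub_tsub, ← Finsupp.single_add]
  simp [mul_assoc]

lemma monomial_mem_map_polyLap {n d : ℕ} (i₀ : Fin n) (α : Fin n →₀ ℕ) (hα : α.degree = d) :
    monomial α 1 ∈ (homogeneousSubmodule (Fin n) ℝ (d + 2)).map (polyLap n) := by
  set M := (homogeneousSubmodule (Fin n) ℝ (d + 2)).map (polyLap n)
  induction hk : d - α i₀ using Nat.strong_induction_on generalizing α with
  | _ k ih =>
  set β := α + Finsupp.single i₀ 2
  have hβ : β.degree = d + 2 := by simp [β, hα]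
  have hΔβ : polyLap n (monomial β 1) ∈ M :=
    Submodule.mem_map_of_mem (isHomogeneous_monomial _ hβ)
  rw [polyLap_monomial, ← Finset.add_sum_erase _ _ (Finset.mem_univ i₀)] at hΔβ
  have herr : ∀ i ∈ Finset.univ.erase i₀,
      monomial (β - Finsupp.single i 2) (1 * ((β i * (β i - 1) : ℕ) : ℝ)) ∈ M := by
    intro i hi
    by_cases h2 : 2 ≤ β i
    · set γ := β - Finsupp.single i 2
      have hγ : γ.degree = d := by rw [Finsupp.degree_tsub_single _ h2, hβ]; rfl
      have hγi₀ : γ i₀ = α i₀ + 2 := by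
        simp [γ, β, Ne.symm (Finset.ne_of_mem_erase hi)]
      have hlt : d - γ i₀ < k := by
        have hγi₀_le := hγ ▸ γ.le_degree i₀
        omega
      simpa [smul_monomial] using M.smul_mem ((β i * (β i - 1) : ℕ) : ℝ) (ih _ hlt γ hγ rfl)
    · simp [Nat.mul_eq_zero.mpr (by omega : β i = 0 ∨ β i - 1 = 0)]
  have hlead : monomial (β - Finsupp.single i₀ 2) (1 * ((β i₀ * (β i₀ - 1) : ℕ) : ℝ)) =
      (((α i₀ + 2) * (α i₀ + 1) : ℕ) : ℝ) • monomial α 1 := by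
    simp [β, smul_monomial]
  rw [hlead, Submodule.add_mem_iff_left M (M.sum_mem herr)] at hΔβ
  exact (M.smul_mem_iff (by positivity)).mp hΔβ

lemma homogeneousSubmodule_le_map_polyLap {n : ℕ} (i₀ : Fin n) (d : ℕ) :
    homogeneousSubmodule (Fin n) ℝ d ≤
      (homogeneousSubmodule (Fin n) ℝ (d + 2)).map (polyLap n) := by
  rw [homogeneousSubmodule_eq_finsupp_supported, AddMonoidAlgebra.supported_eq_span_single,
    Submodule.span_le]
  rintro _ ⟨α, hα, rfl⟩
  exact monomial_mem_map_polyLap i₀ α hα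

/-- **Surjectivity of the Laplacian on homogeneous polynomials** (Lemma 3.7, from
Colding–Minicozzi): `Δ : A_{d+2}^n → A_d^n` is onto. -/
theorem polyLap_surjective_homogeneous (n : ℕ) (hn : 1 ≤ n) (d : ℕ) :
    ∀ p ∈ homogeneousSubmodule (Fin n) ℝ d,
      ∃ q ∈ homogeneousSubmodule (Fin n) ℝ (d + 2), polyLap n q = p :=
  fun _ hp => homogeneousSubmodule_le_map_polyLap ⟨0, hn⟩ d hp
end
end

section
/- Surjectivity of the bilaplacian on homogeneous polynomials (Lemma 3.8, part 1): For every integer n ≥ 1 and every integer d ≥ 0, the linear map ΔΔ : A_{d+4}^n → A_d^n given by the square of the polynomial Laplacian is surjective. -/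
noncomputable section

open MvPolynomial

/-!
Fix a variable `xᵢ` and let `I` be the double antiderivative in `xᵢ`, so that `∂ᵢ² I = 1` and
`Δ I = 1 - f` with `f = -(∑_{j ≠ i} ∂ⱼ²) I`. The operator `f` preserves the degree and raises the
`xᵢ`-exponent of every monomial by `2`, so `f ^ (e + 1)` kills `A_e`, and the geometric series
`q = I (∑_{k ≤ e} f ^ k p)` solves `Δ q = p` in `A_{e+2}`. Applying this twice inverts `ΔΔ`.
-/

namespace MvPolynomial

open Finsupp

variable {σ R : Type*}

section CommSemiring

variable [CommSemiring R]

theorem map_mem_of_mem_restrictSupport {M : Type*} [AddCommMonoid M] [Module R M]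
    (φ : MvPolynomial σ R →ₗ[R] M) {s : Set (σ →₀ ℕ)} {N : Submodule R M}
    (h : ∀ m ∈ s, φ (monomial m 1) ∈ N) {p : MvPolynomial σ R}
    (hp : p ∈ restrictSupport R s) : φ p ∈ N := by
  rw [restrictSupport_eq_span] at hp
  refine (Submodule.span_le (p := N.comap φ)).mpr ?_ hp
  rintro _ ⟨m, hm, rfl⟩
  exact h m hm

theorem pderiv_mem_restrictSupport_of_ne {i j : σ} (hij : i ≠ j) {k : ℕ}
    {p : MvPolynomial σ R} (hp : p ∈ restrictSupport R {m | k ≤ m j}) :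
    pderiv i p ∈ restrictSupport R {m | k ≤ m j} := by
  refine map_mem_of_mem_restrictSupport (pderiv i).toLinearMap (fun m hm => ?_) hp
  simp only [Derivation.coeFn_coe, pderiv_monomial, monomial_mem_restrictSupport]
  left
  simpa [single_eq_of_ne' hij] using hm

theorem IsHomogeneous.eq_zero_of_mem_restrictSupport {p : MvPolynomial σ R} {e j : ℕ} {i : σ}
    (hp : p.IsHomogeneous e) (hpi : p ∈ restrictSupport R {m | j ≤ m i}) (hej : e < j) :
    p = 0 := by
  refine support_eq_empty.mp (Finset.eq_empty_of_forall_notMem fun m hm => ?_)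
  have hdeg : m.degree = e := by
    rw [degree_eq_weight_one]
    exact hp (mem_support_iff.mp hm)
  have hjm : j ≤ m i := hpi hm
  have := m.le_degree i
  omega

end CommSemiring

section Field

variable [Field R]

def doubleAntideriv (i : σ) : MvPolynomial σ R →ₗ[R] MvPolynomial σ R :=
  (basisMonomials σ R).constr R fun m =>
    monomial (m + single i 2) ((m i + 1 : R) * (m i + 2))⁻¹

theorem doubleAntideriv_monomial (i : σ) (m : σ →₀ ℕ) (c : R) :
    doubleAntideriv i (monomial m c) =
      monomial (m + single i 2) (c * ((m i + 1 : R) * (m i + 2))⁻¹) := by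
  have hc : monomial m c = c • basisMonomials σ R m := by
    rw [coe_basisMonomials, smul_monomial, smul_eq_mul, mul_one]
  rw [hc, map_smul, doubleAntideriv, Module.Basis.constr_basis, smul_monomial, smul_eq_mul]

theorem pderiv_pderiv_doubleAntideriv [CharZero R] (i : σ) (p : MvPolynomial σ R) :
    pderiv i (pderiv i (doubleAntideriv i p)) = p := by
  induction p using MvPolynomial.induction_on' with
  | monomial m c =>
    have hsub : m + single i 2 - single i 1 = m + single i 1 := by
      ext j; by_cases hj : i = j <;> simp [hj]
    have hi : (m + single i 1 : σ →₀ ℕ) i = m i + 1 := by simp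
    rw [doubleAntideriv_monomial, pderiv_monomial, pderiv_monomial, hsub, hi,
      add_tsub_cancel_right]
    have h1 : (m i + 1 : R) ≠ 0 := Nat.cast_add_one_ne_zero (m i)
    have h2 : (m i + 2 : R) ≠ 0 := by exact_mod_cast (m i + 1).succ_ne_zero
    congr 1
    simp only [Finsupp.add_apply, single_eq_same]
    push_cast
    field_simp
  | add p q hp hq => rw [map_add, map_add, map_add, hp, hq]

protected theorem IsHomogeneous.doubleAntideriv {p : MvPolynomial σ R} {e : ℕ}
    (hp : p.IsHomogeneous e) (i : σ) : (doubleAntideriv i p).IsHomogeneous (e + 2) := by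
  rw [← mem_homogeneousSubmodule, homogeneousSubmodule_eq_finsupp_supported] at hp
  rw [← mem_homogeneousSubmodule]
  refine map_mem_of_mem_restrictSupport (s := {d | d.degree = e}) (doubleAntideriv i)
    (fun m hm => ?_) hp
  rw [doubleAntideriv_monomial]
  refine isHomogeneous_monomial _ ?_
  simp [hm.symm]

theorem doubleAntideriv_mem_restrictSupport {i : σ} {k : ℕ} {p : MvPolynomial σ R}
    (hp : p ∈ restrictSupport R {m | k ≤ m i}) :
    doubleAntideriv i p ∈ restrictSupport R {m | k + 2 ≤ m i} := by
  refine map_mem_of_mem_restrictSupport (doubleAntideriv i) (fun m hm => ?_) hp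
  rw [doubleAntideriv_monomial, monomial_mem_restrictSupport]
  left
  simpa using hm

end Field

section Laplacian

open Finset

variable {n : ℕ}

theorem polyLap_apply (p : MvPolynomial (Fin n) ℝ) :
    polyLap n p = ∑ i, pderiv i (pderiv i p) := by
  simp [polyLap]

protected theorem IsHomogeneous.polyLap {p : MvPolynomial (Fin n) ℝ} {e : ℕ}
    (hp : p.IsHomogeneous (e + 2)) : (polyLap n p).IsHomogeneous e := by
  rw [polyLap_apply]
  exact IsHomogeneous.sum _ _ _ fun i _ => hp.pderiv.pderiv

theorem polyLap_doubleAntideriv (i : Fin n) (p : MvPolynomial (Fin n) ℝ) :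
    polyLap n (doubleAntideriv i p) =
      p + ∑ j ∈ univ.erase i, pderiv j (pderiv j (doubleAntideriv i p)) := by
  rw [polyLap_apply, ← Finset.add_sum_erase _ _ (mem_univ i), pderiv_pderiv_doubleAntideriv]

theorem exists_isHomogeneous_polyLap_eq (i : Fin n) {p : MvPolynomial (Fin n) ℝ} {e : ℕ}
    (hp : p.IsHomogeneous e) :
    ∃ q : MvPolynomial (Fin n) ℝ, q.IsHomogeneous (e + 2) ∧ polyLap n q = p := by
  set f : Module.End ℝ (MvPolynomial (Fin n) ℝ) := 1 - polyLap n ∘ₗ doubleAntideriv i with hf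
  have hf_hom {q : MvPolynomial (Fin n) ℝ} (hq : q.IsHomogeneous e) : (f q).IsHomogeneous e :=
    Submodule.sub_mem (homogeneousSubmodule _ ℝ e) hq (hq.doubleAntideriv i).polyLap
  have hf_ge {q : MvPolynomial (Fin n) ℝ} {k : ℕ} (hq : q ∈ restrictSupport ℝ {m | k ≤ m i}) :
      f q ∈ restrictSupport ℝ {m | k + 2 ≤ m i} := by
    have hfq : f q = -∑ j ∈ univ.erase i, pderiv j (pderiv j (doubleAntideriv i q)) := by
      simp [hf, polyLap_doubleAntideriv]
    rw [hfq]
    refine Submodule.neg_mem _ (Submodule.sum_mem _ fun j hj => ?_)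
    have hji := ne_of_mem_erase hj
    exact pderiv_mem_restrictSupport_of_ne hji
      (pderiv_mem_restrictSupport_of_ne hji (doubleAntideriv_mem_restrictSupport hq))
  have hf_pow (k : ℕ) :
      ((f ^ k) p).IsHomogeneous e ∧ (f ^ k) p ∈ restrictSupport ℝ {m | 2 * k ≤ m i} := by
    induction k with
    | zero => exact ⟨hp, fun m _ => Nat.zero_le _⟩
    | succ k ih =>
      rw [pow_succ', Module.End.mul_apply, mul_add, mul_one]
      exact ⟨hf_hom ih.1, hf_ge ih.2⟩
  have hf_nil : (f ^ (e + 1)) p = 0 :=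
    (hf_pow (e + 1)).1.eq_zero_of_mem_restrictSupport (hf_pow (e + 1)).2 (by omega)
  refine ⟨doubleAntideriv i (∑ k ∈ range (e + 1), (f ^ k) p),
    (IsHomogeneous.sum _ _ _ fun k _ => (hf_pow k).1).doubleAntideriv i, ?_⟩
  calc polyLap n (doubleAntideriv i (∑ k ∈ range (e + 1), (f ^ k) p))
      = ((1 - f) * ∑ k ∈ range (e + 1), f ^ k) p := by
        simp [hf, LinearMap.sum_apply]
    _ = p := by
        rw [mul_neg_geom_sum, LinearMap.sub_apply, hf_nil, sub_zero, Module.End.one_apply]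

end Laplacian

end MvPolynomial

/-- **Surjectivity of the bilaplacian on homogeneous polynomials** (Lemma 3.8, part 1):
`ΔΔ : A_{d+4}^n → A_d^n` is onto. -/
theorem polyBilap_surjective_homogeneous (n : ℕ) (hn : 1 ≤ n) (d : ℕ) :
    ∀ p ∈ homogeneousSubmodule (Fin n) ℝ d,
      ∃ q ∈ homogeneousSubmodule (Fin n) ℝ (d + 4), polyLap n (polyLap n q) = p := by
  intro p hp
  obtain ⟨r, hr, rfl⟩ := exists_isHomogeneous_polyLap_eq ⟨0, hn⟩ hp
  obtain ⟨q, hq, rfl⟩ := exists_isHomogeneous_polyLap_eq ⟨0, hn⟩ hr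
  exact ⟨q, hq, rfl⟩
end
end
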